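/- Closing substitutions preserve reducibility: if Γ ⊢ M : A and σ : ℕ → term is a substitution such that Red (σ i) a whenever Γ.get? i = some a, then Red (M[σ]) A, where M[σ] is the simultaneous capture-avoiding substitution of σ i for each free de Bruijn variable i of M. -/

import Mathlib

inductive Ty : Type
  | iota : Ty
  | arr : Ty → Ty → Ty

inductive Tm : Type
  | var : ℕ → Tm
  | const : Tm
  | app : Tm → Tm → Tm
  | abs : Ty → Tm → Tm

def liftRen (ρ : ℕ → ℕ) : ℕ → ℕ
  | 0 => 0
  | n + 1 => ρ n + 1

def rename (ρ : ℕ → ℕ) : Tm → Tm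
  | Tm.var n => Tm.var (ρ n)
  | Tm.const => Tm.const
  | Tm.app m n => Tm.app (rename ρ m) (rename ρ n)
  | Tm.abs a r => Tm.abs a (rename (liftRen ρ) r)

def liftSub (σ : ℕ → Tm) : ℕ → Tm
  | 0 => Tm.var 0
  | n + 1 => rename Nat.succ (σ n)

/-- Simultaneous capture-avoiding substitution. -/
def subst (σ : ℕ → Tm) : Tm → Tm
  | Tm.var n => σ n
  | Tm.const => Tm.const
  | Tm.app m n => Tm.app (subst σ m) (subst σ n)
  | Tm.abs a r => Tm.abs a (subst (liftSub σ) r)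

/-- `subst0 s t` is `t[0 := s]`. -/
def subst0 (s : Tm) (t : Tm) : Tm :=
  subst (fun n => match n with | 0 => s | Nat.succ k => Tm.var k) t

inductive Typed : List Ty → Tm → Ty → Prop
  | var {Γ : List Ty} {n : ℕ} {a : Ty} :
      Γ[n]? = some a → Typed Γ (Tm.var n) a
  | const {Γ : List Ty} {a : Ty} : Typed Γ Tm.const a
  | app {Γ : List Ty} {m n : Tm} {a b : Ty} :
      Typed Γ m (Ty.arr a b) → Typed Γ n a → Typed Γ (Tm.app m n) b
  | abs {Γ : List Ty} {r : Tm} {a b : Ty} :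
      Typed (a :: Γ) r b → Typed Γ (Tm.abs a r) (Ty.arr a b)

/-- One-step (β) reduction. -/
inductive Step : Tm → Tm → Prop
  | beta {a : Ty} {r m : Tm} : Step (Tm.app (Tm.abs a r) m) (subst0 m r)
  | appl {m m' n : Tm} : Step m m' → Step (Tm.app m n) (Tm.app m' n)
  | appr {m n n' : Tm} : Step n n' → Step (Tm.app m n) (Tm.app m n')
  | abs {a : Ty} {r r' : Tm} : Step r r' → Step (Tm.abs a r) (Tm.abs a r')

/-- Strong normalization. -/
inductive SN : Tm → Prop
  | intro {M : Tm} : (∀ M', Step M M' → SN M') → SN M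

/-- Tait-style reducibility, by recursion on the type. -/
def Red : Tm → Ty → Prop
  | M, Ty.iota => Typed [] M Ty.iota ∧ SN M
  | M, Ty.arr a b => Typed [] M (Ty.arr a b) ∧ ∀ U, Red U a → Red (Tm.app M U) b

/-!
Tait's method in Girard's formulation. By induction on the type, reducible terms are strongly
normalizing (CR1), closed under reduction (CR2), and a neutral term is reducible as soon as all
its one-step reducts are (CR3); in particular the constant is reducible, which is what makes the
function types inhabited in CR1. The theorem is then an induction on the typing derivation. The
only non-trivial case is an abstraction, where CR3 is applied to the redex `(λ r) N` by a double
induction on the strong normalization of `r` and `N`, using that `r[U]` is reducible for every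
reducible `U` rather than tracking the multi-step reduction `r[N] →* r[N']`.
-/

def scons (s : Tm) (σ : ℕ → Tm) : ℕ → Tm
  | 0 => s
  | n + 1 => σ n

lemma subst0_eq_subst_scons (s t : Tm) : subst0 s t = subst (scons s Tm.var) t := rfl

lemma liftRen_comp (ρ ρ' : ℕ → ℕ) : liftRen ρ' ∘ liftRen ρ = liftRen (ρ' ∘ ρ) := by
  funext n
  cases n <;> rfl

lemma rename_rename (ρ ρ' : ℕ → ℕ) (t : Tm) : rename ρ' (rename ρ t) = rename (ρ' ∘ ρ) t := by
  induction t generalizing ρ ρ' with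
  | var n => rfl
  | const => rfl
  | app m n ihm ihn => simp only [rename, ihm, ihn]
  | abs a r ih => simp only [rename, ih, liftRen_comp]

lemma liftSub_comp_liftRen (σ : ℕ → Tm) (ρ : ℕ → ℕ) :
    liftSub σ ∘ liftRen ρ = liftSub (σ ∘ ρ) := by
  funext n
  cases n <;> rfl

lemma subst_rename (σ : ℕ → Tm) (ρ : ℕ → ℕ) (t : Tm) :
    subst σ (rename ρ t) = subst (σ ∘ ρ) t := by
  induction t generalizing σ ρ with
  | var n => rfl
  | const => rfl
  | app m n ihm ihn => simp only [rename, subst, ihm, ihn]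
  | abs a r ih => simp only [rename, subst, ih, liftSub_comp_liftRen]

lemma rename_comp_liftSub (ρ : ℕ → ℕ) (σ : ℕ → Tm) :
    rename (liftRen ρ) ∘ liftSub σ = liftSub (rename ρ ∘ σ) := by
  funext n
  cases n with
  | zero => rfl
  | succ k =>
    show rename _ (rename Nat.succ (σ k)) = rename Nat.succ (rename ρ (σ k))
    rw [rename_rename, rename_rename]
    rfl

lemma rename_subst (ρ : ℕ → ℕ) (σ : ℕ → Tm) (t : Tm) :
    rename ρ (subst σ t) = subst (rename ρ ∘ σ) t := by
  induction t generalizing ρ σ with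
  | var n => rfl
  | const => rfl
  | app m n ihm ihn => simp only [rename, subst, ihm, ihn]
  | abs a r ih => simp only [rename, subst, ih, rename_comp_liftSub]

lemma subst_comp_liftSub (τ σ : ℕ → Tm) :
    subst (liftSub τ) ∘ liftSub σ = liftSub (subst τ ∘ σ) := by
  funext n
  cases n with
  | zero => rfl
  | succ k => exact (subst_rename _ _ _).trans (rename_subst _ _ _).symm

lemma subst_subst (σ τ : ℕ → Tm) (t : Tm) : subst τ (subst σ t) = subst (subst τ ∘ σ) t := by
  induction t generalizing σ τ with
  | var n => rfl
  | const => rfl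
  | app m n ihm ihn => simp only [subst, ihm, ihn]
  | abs a r ih => simp only [subst, ih, subst_comp_liftSub]

lemma liftSub_var : liftSub Tm.var = Tm.var := by
  funext n
  cases n <;> rfl

lemma subst_var (t : Tm) : subst Tm.var t = t := by
  induction t with
  | var n => rfl
  | const => rfl
  | app m n ihm ihn => simp only [subst, ihm, ihn]
  | abs a r ih => simp only [subst, liftSub_var, ih]

lemma subst0_subst_liftSub (s : Tm) (σ : ℕ → Tm) (t : Tm) :
    subst0 s (subst (liftSub σ) t) = subst (scons s σ) t := by
  rw [subst0_eq_subst_scons, subst_subst]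
  congr 1
  funext n
  cases n with
  | zero => rfl
  | succ k => exact (subst_rename _ _ _).trans (subst_var _)

lemma subst_subst0 (σ : ℕ → Tm) (s t : Tm) :
    subst σ (subst0 s t) = subst0 (subst σ s) (subst (liftSub σ) t) := by
  rw [subst0_subst_liftSub, subst0_eq_subst_scons, subst_subst]
  congr 1
  funext n
  cases n <;> rfl

lemma Step.subst {t t' : Tm} (h : Step t t') (σ : ℕ → Tm) : Step (subst σ t) (subst σ t') := by
  induction h generalizing σ with
  | beta => rw [subst_subst0]; exact Step.beta
  | appl _ ih => exact Step.appl (ih σ)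
  | appr _ ih => exact Step.appr (ih σ)
  | abs _ ih => exact Step.abs (ih _)

lemma Typed.rename {Γ Δ : List Ty} {t : Tm} {a : Ty} {ρ : ℕ → ℕ} (h : Typed Γ t a)
    (hρ : ∀ n b, Γ[n]? = some b → Δ[ρ n]? = some b) : Typed Δ (rename ρ t) a := by
  induction h generalizing Δ ρ with
  | var hv => exact Typed.var (hρ _ _ hv)
  | const => exact Typed.const
  | app _ _ ihm ihn => exact Typed.app (ihm hρ) (ihn hρ)
  | abs _ ih =>
    refine Typed.abs (ih fun n c hc => ?_)
    cases n with
    | zero => exact hc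
    | succ k => exact hρ k c hc

lemma Typed.subst {Γ Δ : List Ty} {t : Tm} {a : Ty} {σ : ℕ → Tm} (h : Typed Γ t a)
    (hσ : ∀ n b, Γ[n]? = some b → Typed Δ (σ n) b) : Typed Δ (subst σ t) a := by
  induction h generalizing Δ σ with
  | var hv => exact hσ _ _ hv
  | const => exact Typed.const
  | app _ _ ihm ihn => exact Typed.app (ihm hσ) (ihn hσ)
  | abs _ ih =>
    refine Typed.abs (ih fun n c hc => ?_)
    cases n with
    | zero => exact Typed.var hc
    | succ k => exact (hσ k c hc).rename fun _ _ hb => hb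

lemma Typed.of_step {Γ : List Ty} {t t' : Tm} {a : Ty} (ht : Typed Γ t a) (h : Step t t') :
    Typed Γ t' a := by
  induction h generalizing Γ a with
  | beta =>
    obtain _ | _ | ⟨hm, hn⟩ := ht
    obtain _ | _ | _ | ⟨hr⟩ := hm
    refine hr.subst fun n c hc => ?_
    cases n with
    | zero => cases hc; exact hn
    | succ k => exact Typed.var hc
  | appl _ ih => obtain _ | _ | ⟨hm, hn⟩ := ht; exact Typed.app (ih hm) hn
  | appr _ ih => obtain _ | _ | ⟨hm, hn⟩ := ht; exact Typed.app hm (ih hn)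
  | abs _ ih => obtain _ | _ | _ | ⟨hr⟩ := ht; exact Typed.abs (ih hr)

lemma SN.of_step {t t' : Tm} (ht : SN t) (h : Step t t') : SN t' := by
  obtain ⟨ht⟩ := ht
  exact ht t' h

lemma SN.of_app_left {m n : Tm} (h : SN (Tm.app m n)) : SN m := by
  generalize hmn : Tm.app m n = t at h
  induction h generalizing m with
  | intro _ ih =>
    subst hmn
    exact SN.intro fun m' hm' => ih _ (Step.appl hm') rfl

lemma SN.of_subst {t : Tm} {σ : ℕ → Tm} (h : SN (subst σ t)) : SN t := by
  generalize hs : subst σ t = s at h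
  induction h generalizing t with
  | intro _ ih =>
    subst hs
    exact SN.intro fun t' ht' => ih _ (ht'.subst σ) rfl

def Neutral : Tm → Prop
  | Tm.abs _ _ => False
  | _ => True

lemma Red.typed {M : Tm} {A : Ty} (h : Red M A) : Typed [] M A := by
  cases A with
  | iota => exact h.1
  | arr a b => exact h.1

lemma Red.of_step {M M' : Tm} {A : Ty} (hM : Red M A) (h : Step M M') : Red M' A := by
  induction A generalizing M M' with
  | iota => exact ⟨hM.1.of_step h, hM.2.of_step h⟩
  | arr a b _ ihb => exact ⟨hM.1.of_step h, fun U hU => ihb (hM.2 U hU) (Step.appl h)⟩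

lemma sn_of_red_and_red_of_neutral (A : Ty) :
    (∀ {M}, Red M A → SN M) ∧
    (∀ {M}, Typed [] M A → Neutral M → (∀ M', Step M M' → Red M' A) → Red M A) := by
  induction A with
  | iota => exact ⟨fun h => h.2, fun ht _ hred => ⟨ht, SN.intro fun M' h => (hred M' h).2⟩⟩
  | arr a b iha ihb =>
    obtain ⟨sn_a, of_neutral_a⟩ := iha
    obtain ⟨sn_b, of_neutral_b⟩ := ihb
    have red_const_a : Red Tm.const a := of_neutral_a Typed.const trivial fun _ h => nomatch h
    refine ⟨fun hM => (sn_b (hM.2 _ red_const_a)).of_app_left, fun {M} ht hM hred => ⟨ht, ?_⟩⟩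
    intro U hU
    induction sn_a hU with
    | intro _ ihU =>
      refine of_neutral_b (Typed.app ht hU.typed) trivial fun M' h => ?_
      cases h with
      | beta => exact hM.elim
      | appl h => exact (hred _ h).2 _ hU
      | appr h => exact ihU _ h (hU.of_step h)

lemma Red.sn {M : Tm} {A : Ty} (h : Red M A) : SN M :=
  (sn_of_red_and_red_of_neutral A).1 h

lemma Red.of_neutral {M : Tm} {A : Ty} (ht : Typed [] M A) (hM : Neutral M)
    (hred : ∀ M', Step M M' → Red M' A) : Red M A :=
  (sn_of_red_and_red_of_neutral A).2 ht hM hred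

lemma red_const (A : Ty) : Red Tm.const A :=
  Red.of_neutral Typed.const trivial fun _ h => nomatch h

lemma red_app_abs {a b : Ty} {r N : Tm} (hr : Typed [a] r b)
    (hred : ∀ U, Red U a → Red (subst0 U r) b) (hN : Red N a) :
    Red (Tm.app (Tm.abs a r) N) b := by
  have hsn_r : SN r := SN.of_subst (hred N hN).sn
  induction hsn_r generalizing N with
  | intro _ ihr =>
    induction hN.sn with
    | intro _ ihN =>
      refine Red.of_neutral (Typed.app (Typed.abs hr) hN.typed) trivial fun M' h => ?_
      cases h with
      | beta => exact hred _ hN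
      | appl h =>
        obtain _ | _ | _ | h := h
        refine ihr _ h (hr.of_step h) (fun U hU => ?_) hN
        exact (hred U hU).of_step (h.subst _)
      | appr h => exact ihN _ h (hN.of_step h)

lemma red_abs {a b : Ty} {r : Tm} (ht : Typed [] (Tm.abs a r) (Ty.arr a b))
    (hred : ∀ U, Red U a → Red (subst0 U r) b) : Red (Tm.abs a r) (Ty.arr a b) := by
  obtain _ | _ | _ | ⟨hr⟩ := ht
  exact ⟨Typed.abs hr, fun _ hN => red_app_abs hr hred hN⟩

theorem red_subst {Γ : List Ty} {M : Tm} {A : Ty} {σ : ℕ → Tm}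
    (ht : Typed Γ M A) (hσ : ∀ (i : ℕ) (a : Ty), Γ[i]? = some a → Red (σ i) a) :
    Red (subst σ M) A := by
  induction ht generalizing σ with
  | var hv => exact hσ _ _ hv
  | const => exact red_const _
  | app _ _ ihm ihn => exact (ihm hσ).2 _ (ihn hσ)
  | abs hr ih =>
    have hclosed : Typed [] (subst σ (Tm.abs _ _)) _ :=
      (Typed.abs hr).subst fun i c hc => (hσ i c hc).typed
    refine red_abs hclosed fun U hU => ?_
    rw [subst0_subst_liftSub]
    refine ih fun i c hc => ?_
    cases i with
    | zero => cases hc; exact hU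
    | succ k => exact hσ k c hc
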